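/- arXiv:1401.2645 — 3 statements merged into one kernel-verified Lean document; each statement's English description precedes it below -/
import Mathlib

section
/- Let a, b > 0 with ab ≠ 1. Then for all n ≥ 0, the multi poly-Euler numbers with parameters satisfy E_n^{(k_1,...,k_r)}(a,b) = E_n^{(k_1,...,k_r)}(ln a / (ln a + ln b)) * (ln a + ln b)^n. -/
open Real Filter

/-- The multi-polylogarithm `Li_{(k_1,…,k_r)}(z) = ∑_{0 < m_1 < … < m_r} z^{m_r} / ∏ m_i^{k_i}`. -/
noncomputable def multiPolylog (r : ℕ) (k : Fin r → ℤ) (z : ℝ) : ℝ :=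
  ∑' m : {f : Fin r → ℕ // StrictMono f ∧ ∀ i, 0 < f i},
    z ^ (Finset.univ.sup m.1) / ∏ i, ((m.1 i : ℝ) ^ (k i))

/-!
Write `L = log a + log b = log (a b)`, which is nonzero since `a b ≠ 1`. Pulling `a ^ (-t)` out of
`a ^ (-t) + b ^ t` gives `a ^ (-t) (1 + e ^ (L t))`, and `(a b) ^ (-t) = e ^ (-L t)`; so the
generating function of the `E_n(a, b)` is the generating function of the `E_n(x)` at
`x = log a / L`, evaluated at `L t`. Comparing Taylor coefficients at `0` gives the claim.
-/

open FormalMultilinearSeries Topology Nat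

lemma hasFPowerSeriesAt_ofScalars_of_eventually_hasSum {c : ℕ → ℝ} {g : ℝ → ℝ}
    (h : ∀ᶠ t in 𝓝 0, HasSum (fun n ↦ c n * t ^ n) (g t)) :
    HasFPowerSeriesAt g (ofScalars ℝ c) 0 := by
  obtain ⟨ε, hε, hball⟩ := Metric.eventually_nhds_iff.mp h
  let ρ : NNReal := ⟨ε / 2, (half_pos hε).le⟩
  have hρε : (ρ : ℝ) < ε := half_lt_self hε
  have hasSum_of_lt {t : ℝ} (ht : |t| < ε) : HasSum (fun n ↦ c n * t ^ n) (g t) :=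
    hball (by rwa [Real.dist_eq, sub_zero])
  refine ⟨ρ, ?_, ENNReal.coe_pos.mpr (half_pos hε), fun {y} hy ↦ ?_⟩
  · refine le_radius_of_summable_norm _ ?_
    have hsum := summable_abs_iff.mpr (hasSum_of_lt (t := ρ) (by simpa using hρε)).summable
    refine hsum.congr fun n ↦ ?_
    rw [ofScalars_norm, abs_mul, abs_of_nonneg (pow_nonneg ρ.coe_nonneg n), Real.norm_eq_abs]
  · rw [Metric.eball_coe, mem_ball_zero_iff, Real.norm_eq_abs] at hy
    simpa only [ofScalars_apply_eq, smul_eq_mul, zero_add] using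
      hasSum_of_lt (hy.trans hρε)

lemma coeff_eq_of_eventually_hasSum {c d : ℕ → ℝ} {g : ℝ → ℝ}
    (hc : ∀ᶠ t in 𝓝 0, HasSum (fun n ↦ c n * t ^ n) (g t))
    (hd : ∀ᶠ t in 𝓝 0, HasSum (fun n ↦ d n * t ^ n) (g t)) : c = d :=
  ofScalars_series_injective ℝ ℝ <|
    (hasFPowerSeriesAt_ofScalars_of_eventually_hasSum hc).eq_formalMultilinearSeries
      (hasFPowerSeriesAt_ofScalars_of_eventually_hasSum hd)

lemma eq_mul_pow_of_eventually_hasSum_comp_mul {c d : ℕ → ℝ} {f : ℝ → ℝ} (L : ℝ)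
    (hc : ∀ᶠ t in 𝓝 0, HasSum (fun n ↦ c n * t ^ n / n !) (f t))
    (hd : ∀ᶠ t in 𝓝 0, HasSum (fun n ↦ d n * t ^ n / n !) (f (L * t))) (n : ℕ) :
    d n = c n * L ^ n := by
  have hmul : Tendsto (L * ·) (𝓝 0) (𝓝 0) := by
    simpa using (continuous_const_mul L).tendsto 0
  have hc' : ∀ᶠ t in 𝓝 0, HasSum (fun n ↦ c n * L ^ n / n ! * t ^ n) (f (L * t)) := by
    filter_upwards [hmul.eventually hc] with t ht
    exact ht.congr_fun fun n ↦ by ring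
  have hd' : ∀ᶠ t in 𝓝 0, HasSum (fun n ↦ d n / n ! * t ^ n) (f (L * t)) := by
    filter_upwards [hd] with t ht
    exact ht.congr_fun fun n ↦ by ring
  have h := congrFun (coeff_eq_of_eventually_hasSum hd' hc') n
  have hn : (n ! : ℝ) ≠ 0 := by positivity
  field_simp at h
  exact h

lemma div_rpow_neg_add_rpow_pow {a b : ℝ} (ha : 0 < a) (hb : 0 < b) (G : ℝ → ℝ) (r : ℕ)
    (t : ℝ) :
    G ((a * b) ^ (-t)) / (a ^ (-t) + b ^ t) ^ r =
      G (exp (-((log a + log b) * t))) / (1 + exp ((log a + log b) * t)) ^ r *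
        exp (r * log a * t) := by
  have hab : (a * b) ^ (-t) = exp (-((log a + log b) * t)) := by
    rw [rpow_def_of_pos (mul_pos ha hb), log_mul ha.ne' hb.ne']
    ring_nf
  have hden : a ^ (-t) + b ^ t = (1 + exp ((log a + log b) * t)) / exp (log a * t) := by
    rw [rpow_def_of_pos ha, rpow_def_of_pos hb, add_div, div_eq_mul_inv, one_mul, ← exp_neg,
      ← exp_sub]
    ring_nf
  have hweight : exp (r * log a * t) = exp (log a * t) ^ r := by
    rw [← exp_nat_mul]
    ring_nf
  rw [hab, hden, hweight, div_pow, div_div_eq_mul_div, mul_div_right_comm]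

theorem multiPolyEuler_param_eq_general (r : ℕ) (k : Fin r → ℤ)
    (a b : ℝ) (ha : 0 < a) (hb : 0 < b) (hab : a * b ≠ 1)
    (E : ℕ → ℝ → ℝ) (F : ℕ → ℝ)
    (hE : ∀ x : ℝ, ∀ᶠ t in nhds (0 : ℝ),
      HasSum (fun n : ℕ => E n x * t ^ n / n.factorial)
        (2 * multiPolylog r k (1 - Real.exp (-t)) / (1 + Real.exp t) ^ r *
          Real.exp (r * x * t)))
    (hF : ∀ᶠ t in nhds (0 : ℝ),
      HasSum (fun n : ℕ => F n * t ^ n / n.factorial)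
        (2 * multiPolylog r k (1 - (a * b) ^ (-t)) / (a ^ (-t) + b ^ t) ^ r)) :
    ∀ n : ℕ, F n =
      E n (Real.log a / (Real.log a + Real.log b)) * (Real.log a + Real.log b) ^ n := by
  have hL : log a + log b ≠ 0 := by
    rw [← log_mul ha.ne' hb.ne']
    exact log_ne_zero_of_pos_of_ne_one (mul_pos ha hb) hab
  refine eq_mul_pow_of_eventually_hasSum_comp_mul _ (hE (log a / (log a + log b))) ?_
  filter_upwards [hF] with t ht
  have hweight : r * (log a / (log a + log b)) * ((log a + log b) * t) = r * log a * t := by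
    field_simp
  rwa [hweight, ← div_rpow_neg_add_rpow_pow ha hb (fun z ↦ 2 * multiPolylog r k (1 - z))]

/-- `E_n^{(k_1,…,k_r)}(a,b) = E_n^{(k_1,…,k_r)}(ln a/(ln a + ln b)) * (ln a + ln b)^n`. -/
theorem multiPolyEuler_param_eq (r : ℕ) (hr : 0 < r) (k : Fin r → ℤ)
    (a b : ℝ) (ha : 0 < a) (hb : 0 < b) (hab : a * b ≠ 1)
    (E : ℕ → ℝ → ℝ) (F : ℕ → ℝ)
    (hE : ∀ x : ℝ, ∀ᶠ t in nhds (0 : ℝ),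
      HasSum (fun n : ℕ => E n x * t ^ n / n.factorial)
        (2 * multiPolylog r k (1 - Real.exp (-t)) / (1 + Real.exp t) ^ r *
          Real.exp (r * x * t)))
    (hF : ∀ᶠ t in nhds (0 : ℝ),
      HasSum (fun n : ℕ => F n * t ^ n / n.factorial)
        (2 * multiPolylog r k (1 - (a * b) ^ (-t)) / (a ^ (-t) + b ^ t) ^ r)) :
    ∀ n : ℕ, F n =
      E n (Real.log a / (Real.log a + Real.log b)) * (Real.log a + Real.log b) ^ n :=
  multiPolyEuler_param_eq_general r k a b ha hb hab E F hE hF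
end

section
/- Let a, b > 0 with ab ≠ 1. Then for all n ≥ 0, E_n^{(k_1,...,k_r)}(a,b) = sum over i from 0 to n of r^{n-i} * (ln a + ln b)^i * (ln a)^{n-i} * binomial(n,i) * E_i^{(k_1,...,k_r)}, where E_i^{(k_1,...,k_r)} = E_i^{(k_1,...,k_r)}(0) are the multi poly-Euler numbers. -/
open Real Filter

/-!
With `c = log a + log b`, one has `(ab)^(-t) = e^(-ct)` and `a^(-t) + b^t = e^(-t log a) (1 + e^(ct))`,
so the parametrized generating function is the generating function of the `E_n` at `ct`, times
`e^(r t log a)`. Its coefficients are therefore the binomial convolution of `cⁿ E_n` with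
`(r log a)ⁿ`, and power-series coefficients are unique.
-/

theorem eq_of_eventually_hasSum_egf {𝕜 : Type*} [NontriviallyNormedField 𝕜] [CharZero 𝕜]
    {A B : ℕ → 𝕜} {f : 𝕜 → 𝕜}
    (hA : ∀ᶠ t in nhds 0, HasSum (fun n => A n * t ^ n / n.factorial) (f t))
    (hB : ∀ᶠ t in nhds 0, HasSum (fun n => B n * t ^ n / n.factorial) (f t)) :
    A = B := by
  have hseries : ∀ {C : ℕ → 𝕜},
      (∀ᶠ t in nhds 0, HasSum (fun n => C n * t ^ n / n.factorial) (f t)) →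
      HasFPowerSeriesAt f (.ofScalars 𝕜 fun n => C n / n.factorial) 0 := by
    intro C hC
    rw [hasFPowerSeriesAt_iff]
    filter_upwards [hC] with t ht
    simpa only [FormalMultilinearSeries.coeff_ofScalars, smul_eq_mul, mul_div_assoc',
      mul_comm, zero_add] using ht
  have hcoeff := FormalMultilinearSeries.ofScalars_series_injective 𝕜 𝕜
    ((hseries hA).eq_formalMultilinearSeries (hseries hB))
  funext n
  simpa [Nat.factorial_ne_zero] using congrFun hcoeff n

theorem Filter.Eventually.hasSum_egf_comp_const_mul {𝕜 : Type*} [NormedField 𝕜]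
    {A : ℕ → 𝕜} {f : 𝕜 → 𝕜}
    (h : ∀ᶠ t in nhds 0, HasSum (fun n => A n * t ^ n / n.factorial) (f t)) (c : 𝕜) :
    ∀ᶠ t in nhds 0, HasSum (fun n => c ^ n * A n * t ^ n / n.factorial) (f (c * t)) := by
  filter_upwards [((continuous_const_mul c).tendsto' 0 0 (mul_zero c)).eventually h] with t ht
  simpa only [mul_pow, mul_left_comm, mul_assoc] using ht

theorem HasSum.egf_mul {𝕜 : Type*} [RCLike 𝕜] {A B : ℕ → 𝕜} {t S T : 𝕜}
    (hA : HasSum (fun n => A n * t ^ n / n.factorial) S)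
    (hB : HasSum (fun n => B n * t ^ n / n.factorial) T) :
    HasSum (fun n => (∑ i ∈ Finset.range (n + 1), (n.choose i : 𝕜) * A i * B (n - i)) *
      t ^ n / n.factorial) (S * T) := by
  have := hasSum_sum_range_mul_of_summable_norm hA.summable.norm hB.summable.norm
  rw [hA.tsum_eq, hB.tsum_eq] at this
  refine this.congr_fun fun n => ?_
  rw [Finset.sum_mul, Finset.sum_div]
  refine Finset.sum_congr rfl fun i hi => ?_
  obtain ⟨j, rfl⟩ := Nat.exists_eq_add_of_le (Finset.mem_range_succ_iff.mp hi)
  have hfact : ((i + j).factorial : 𝕜) ≠ 0 := Nat.cast_ne_zero.mpr (Nat.factorial_ne_zero _)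
  rw [Nat.add_sub_cancel_left, Nat.cast_add_choose, pow_add]
  field_simp

theorem Real.hasSum_egf_exp (u t : ℝ) :
    HasSum (fun n => u ^ n * t ^ n / n.factorial) (Real.exp (u * t)) := by
  simpa only [mul_pow, Real.exp_eq_exp_ℝ] using NormedSpace.expSeries_div_hasSum_exp (u * t)

theorem Real.mul_rpow_neg_eq_exp {a b : ℝ} (ha : 0 < a) (hb : 0 < b) (t : ℝ) :
    (a * b) ^ (-t) = Real.exp (-((Real.log a + Real.log b) * t)) := by
  rw [Real.rpow_def_of_pos (mul_pos ha hb), Real.log_mul ha.ne' hb.ne', mul_neg]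

theorem Real.rpow_neg_add_rpow_eq_exp {a b : ℝ} (ha : 0 < a) (hb : 0 < b) (t : ℝ) :
    a ^ (-t) + b ^ t =
      Real.exp (-(Real.log a * t)) * (1 + Real.exp ((Real.log a + Real.log b) * t)) := by
  rw [Real.rpow_def_of_pos ha, Real.rpow_def_of_pos hb, mul_add, mul_one, ← Real.exp_add]
  congr 2 <;> ring

theorem multiPolyEuler_param_sum_general (r : ℕ) (k : Fin r → ℤ)
    (a b : ℝ) (ha : 0 < a) (hb : 0 < b)
    (E : ℕ → ℝ → ℝ) (F : ℕ → ℝ)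
    (hE : ∀ x : ℝ, ∀ᶠ t in nhds (0 : ℝ),
      HasSum (fun n : ℕ => E n x * t ^ n / n.factorial)
        (2 * multiPolylog r k (1 - Real.exp (-t)) / (1 + Real.exp t) ^ r *
          Real.exp (r * x * t)))
    (hF : ∀ᶠ t in nhds (0 : ℝ),
      HasSum (fun n : ℕ => F n * t ^ n / n.factorial)
        (2 * multiPolylog r k (1 - (a * b) ^ (-t)) / (a ^ (-t) + b ^ t) ^ r)) :
    ∀ n : ℕ, F n =
      ∑ i ∈ Finset.range (n + 1),
        (r : ℝ) ^ (n - i) * (Real.log a + Real.log b) ^ i * (Real.log a) ^ (n - i) *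
          (n.choose i : ℝ) * E i 0 := by
  set c := Real.log a + Real.log b
  have hE0 := Filter.Eventually.hasSum_egf_comp_const_mul
    ((hE 0).mono fun t ht => by simpa only [mul_zero, zero_mul, Real.exp_zero, mul_one] using ht) c
  have hparam : ∀ᶠ t in nhds 0, HasSum
      (fun n => (∑ i ∈ Finset.range (n + 1),
        (n.choose i : ℝ) * (c ^ i * E i 0) * (r * Real.log a) ^ (n - i)) * t ^ n / n.factorial)
      (2 * multiPolylog r k (1 - (a * b) ^ (-t)) / (a ^ (-t) + b ^ t) ^ r) := by
    filter_upwards [hE0] with t ht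
    have hgf : 2 * multiPolylog r k (1 - (a * b) ^ (-t)) / (a ^ (-t) + b ^ t) ^ r =
        2 * multiPolylog r k (1 - Real.exp (-(c * t))) / (1 + Real.exp (c * t)) ^ r *
          Real.exp (r * Real.log a * t) := by
      rw [Real.mul_rpow_neg_eq_exp ha hb, Real.rpow_neg_add_rpow_eq_exp ha hb, mul_pow,
        ← Real.exp_nat_mul, mul_neg, ← mul_assoc,
        Real.exp_neg (r * Real.log a * t), div_mul_eq_div_div, div_inv_eq_mul]
      ring
    rw [hgf]
    exact ht.egf_mul (Real.hasSum_egf_exp (r * Real.log a) t)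
  intro n
  rw [congrFun (eq_of_eventually_hasSum_egf hF hparam) n]
  refine Finset.sum_congr rfl fun i _ => ?_
  rw [mul_pow]
  ring

/-- `E_n^{(k_1,…,k_r)}(a,b) = ∑_{i=0}^n r^{n-i} (ln a + ln b)^i (ln a)^{n-i} C(n,i) E_i^{(k_1,…,k_r)}`. -/
theorem multiPolyEuler_param_sum (r : ℕ) (hr : 0 < r) (k : Fin r → ℤ)
    (a b : ℝ) (ha : 0 < a) (hb : 0 < b) (hab : a * b ≠ 1)
    (E : ℕ → ℝ → ℝ) (F : ℕ → ℝ)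
    (hE : ∀ x : ℝ, ∀ᶠ t in nhds (0 : ℝ),
      HasSum (fun n : ℕ => E n x * t ^ n / n.factorial)
        (2 * multiPolylog r k (1 - Real.exp (-t)) / (1 + Real.exp t) ^ r *
          Real.exp (r * x * t)))
    (hF : ∀ᶠ t in nhds (0 : ℝ),
      HasSum (fun n : ℕ => F n * t ^ n / n.factorial)
        (2 * multiPolylog r k (1 - (a * b) ^ (-t)) / (a ^ (-t) + b ^ t) ^ r)) :
    ∀ n : ℕ, F n =
      ∑ i ∈ Finset.range (n + 1),
        (r : ℝ) ^ (n - i) * (Real.log a + Real.log b) ^ i * (Real.log a) ^ (n - i) *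
          (n.choose i : ℝ) * E i 0 :=
  multiPolyEuler_param_sum_general r k a b ha hb E F hE hF
end

section
/- The generating function identity: Li_{(k_1,...,k_r)}(1-e^{-t}) * e^{rxt} = sum_{n>=0} c_n t^n/n!, where c_n = sum over 0 < m_1 < ... < m_r, sum over j from 0 to m_r of (-1)^j * (rx - j)^n * binomial(m_r, j) / (m_1^{k_1}...m_r^{k_r}). -/
open Real Filter

open PowerSeries Finset Nat

/-!
Expanding binomially, `(1 - e^{-t})^M e^{yt} = ∑_j (-1)^j C(M,j) e^{(y-j)t}`, whose `n`-th Taylor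
coefficient is `c_{M,n}/n!` with `c_{M,n} = ∑_j (-1)^j C(M,j) (y-j)^n`. Hence the identity is the
interchange of `∑_m` and `∑_n` in `∑_m (1 - e^{-t})^{m_r} e^{yt} / ∏ m_i^{k_i}`.

The interchange needs absolute convergence, and the binomial expansion itself is useless for that
(it only gives `|c_{M,n}| ≤ ∑_j C(M,j) (|y| + j)^n`, of size `2^M`). Instead, view the row as the
product of power series `(1 - e^{-t})^M · e^{yt}` and dominate coefficientwise:
`1 - e^{-t}` by `e^t - 1` and `e^{yt}` by `e^{|y|t}`. Then
`∑_n |c_{M,n}| |t|^n / n! ≤ (e^{|t|} - 1)^M e^{|y||t|}`, and once `e^{|t|} - 1 ≤ 2^{-r}` the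
multi-polylogarithm series at `e^{|t|} - 1` converges absolutely.
-/

section Fubini

variable {β γ E : Type*} [NormedAddCommGroup E] [CompleteSpace E]

theorem summable_of_norm_le_of_hasSum_fiberwise {f : β × γ → E} {F : β × γ → ℝ} {G : β → ℝ}
    (hfF : ∀ p, ‖f p‖ ≤ F p) (hF : ∀ b, HasSum (fun c ↦ F (b, c)) (G b)) (hG : Summable G) :
    Summable f := by
  have hF0 : 0 ≤ F := fun p ↦ (norm_nonneg _).trans (hfF p)
  refine Summable.of_norm_bounded ((summable_prod_of_nonneg hF0).2 ⟨fun b ↦ (hF b).summable, ?_⟩)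
    hfF
  exact hG.congr fun b ↦ (hF b).tsum_eq.symm

theorem Summable.hasSum_tsum_fst {f : β × γ → E} {R : β → E} (hf : Summable f)
    (hR : ∀ b, HasSum (fun c ↦ f (b, c)) (R b)) :
    HasSum (fun c ↦ ∑' b, f (b, c)) (∑' b, R b) := by
  have hswap : Summable (f ∘ Prod.swap) := hf.comp_injective Prod.swap_injective
  rw [(hf.hasSum.prod_fiberwise hR).tsum_eq, ← (Equiv.prodComm γ β).tsum_eq]
  exact hswap.hasSum.prod_fiberwise fun c ↦ (hswap.prod_factor c).hasSum

end Fubini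

theorem summable_pi_prod {ι κ : Type*} [Fintype ι] {g : ι → κ → ℝ} (hg0 : ∀ i j, 0 ≤ g i j)
    (hg : ∀ i, Summable (g i)) : Summable fun x : ι → κ ↦ ∏ i, g i (x i) := by
  classical
  refine summable_of_sum_le (c := ∏ i, ∑' j, g i j)
    (fun x ↦ prod_nonneg fun i _ ↦ hg0 i (x i)) fun u ↦ ?_
  have hu : u ⊆ Fintype.piFinset fun i ↦ u.image (· i) := fun x hx ↦
    Fintype.mem_piFinset.2 fun i ↦ mem_image_of_mem _ hx
  calc ∑ x ∈ u, ∏ i, g i (x i)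
      ≤ ∑ x ∈ Fintype.piFinset fun i ↦ u.image (· i), ∏ i, g i (x i) :=
        sum_le_sum_of_subset_of_nonneg hu fun x _ _ ↦ prod_nonneg fun i _ ↦ hg0 i (x i)
    _ = ∏ i, ∑ j ∈ u.image (· i), g i j := (prod_univ_sum _ _).symm
    _ ≤ ∏ i, ∑' j, g i j :=
        prod_le_prod (fun i _ ↦ sum_nonneg fun j _ ↦ hg0 i j)
          fun i _ ↦ (hg i).sum_le_tsum _ fun j _ ↦ hg0 i j

theorem summable_pow_sup_div_prod_zpow {r : ℕ} (k : Fin r → ℤ) {ρ z : ℝ} (hρ0 : 0 ≤ ρ)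
    (hρ1 : ρ < 1) (hz0 : 0 ≤ z) (hz : z ≤ ρ ^ r) :
    Summable fun m : {f : Fin r → ℕ // ∀ i, 0 < f i} ↦
      z ^ univ.sup m.1 / ∏ i, (m.1 i : ℝ) ^ k i := by
  set g : Fin r → ℕ → ℝ := fun i n ↦ (n : ℝ) ^ (-k i).toNat * ρ ^ n
  have hg : Summable fun x : Fin r → ℕ ↦ ∏ i, g i (x i) :=
    summable_pi_prod (fun i n ↦ by positivity) fun i ↦
      summable_pow_mul_geometric_of_norm_lt_one _ (by rwa [Real.norm_of_nonneg hρ0])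
  refine Summable.of_nonneg_of_le (fun m ↦ ?_) (fun m ↦ ?_)
    (hg.comp_injective Subtype.val_injective)
  · positivity
  · have hzM : z ^ univ.sup m.1 ≤ ∏ i, ρ ^ m.1 i :=
      calc z ^ univ.sup m.1 ≤ (ρ ^ r) ^ univ.sup m.1 := pow_le_pow_left₀ hz0 hz _
        _ = ∏ _i : Fin r, ρ ^ univ.sup m.1 := by simp [← pow_mul, mul_comm]
        _ ≤ ∏ i, ρ ^ m.1 i := prod_le_prod (fun _ _ ↦ by positivity) fun i _ ↦
            pow_le_pow_of_le_one hρ0 hρ1.le (le_sup (mem_univ i))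
    have hP : (∏ i, (m.1 i : ℝ) ^ k i)⁻¹ ≤ ∏ i, (m.1 i : ℝ) ^ (-k i).toNat := by
      rw [← prod_inv_distrib]
      refine prod_le_prod (fun _ _ ↦ by positivity) fun i _ ↦ ?_
      rw [← zpow_neg, ← zpow_natCast]
      exact zpow_le_zpow_right₀ (by exact_mod_cast m.2 i) (Int.self_le_toNat _)
    calc z ^ univ.sup m.1 / ∏ i, (m.1 i : ℝ) ^ k i
        ≤ (∏ i, ρ ^ m.1 i) * ∏ i, (m.1 i : ℝ) ^ (-k i).toNat :=
          mul_le_mul hzM hP (by positivity) (by positivity)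
      _ = ∏ i, g i (m.1 i) := by simp only [g, ← prod_mul_distrib, mul_comm]

theorem coeff_rescale_exp (a : ℝ) (n : ℕ) : coeff n (rescale a (exp ℝ)) = a ^ n / n ! := by
  simp [coeff_rescale, coeff_exp, div_eq_mul_inv]

theorem one_sub_rescale_exp_pow_mul (a c : ℝ) (M : ℕ) :
    (1 - rescale a (exp ℝ)) ^ M * rescale c (exp ℝ) =
      ∑ j ∈ range (M + 1), C ((-1 : ℝ) ^ j * M.choose j) * rescale (c + j * a) (exp ℝ) := by
  rw [sub_eq_neg_add, add_pow, sum_mul]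
  refine sum_congr rfl fun j _ ↦ ?_
  rw [one_pow, mul_one, neg_pow, ← map_pow, exp_pow_eq_rescale_exp, rescale_rescale, add_comm c,
    ← exp_mul_exp_eq_exp_add, map_mul, map_pow, map_neg, map_one, map_natCast]
  ring

theorem coeff_one_sub_rescale_exp_pow_mul (a c : ℝ) (M n : ℕ) :
    coeff n ((1 - rescale a (exp ℝ)) ^ M * rescale c (exp ℝ)) =
      (∑ j ∈ range (M + 1), (-1) ^ j * (c + j * a) ^ n * M.choose j) / n ! := by
  simp only [one_sub_rescale_exp_pow_mul, map_sum, coeff_C_mul, coeff_rescale_exp, sum_div]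
  exact sum_congr rfl fun j _ ↦ by ring

theorem hasSum_coeff_one_sub_rescale_exp_pow_mul (a c t : ℝ) (M : ℕ) :
    HasSum (fun n ↦ coeff n ((1 - rescale a (exp ℝ)) ^ M * rescale c (exp ℝ)) * t ^ n)
      ((1 - Real.exp (a * t)) ^ M * Real.exp (c * t)) := by
  have hexp (b : ℝ) : HasSum (fun n ↦ b ^ n / n !) (Real.exp b) := by
    rw [Real.exp_eq_exp_ℝ]; exact NormedSpace.expSeries_div_hasSum_exp b
  have hval : (1 - Real.exp (a * t)) ^ M * Real.exp (c * t) =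
      ∑ j ∈ range (M + 1), (-1) ^ j * M.choose j * Real.exp ((c + j * a) * t) := by
    rw [sub_eq_neg_add, add_pow, sum_mul]
    refine sum_congr rfl fun j _ ↦ ?_
    rw [one_pow, mul_one, neg_pow, ← Real.exp_nat_mul, add_mul, Real.exp_add]
    ring_nf
  have hterm (n : ℕ) : coeff n ((1 - rescale a (exp ℝ)) ^ M * rescale c (exp ℝ)) * t ^ n =
      ∑ j ∈ range (M + 1), (-1) ^ j * M.choose j * (((c + j * a) * t) ^ n / n !) := by
    rw [coeff_one_sub_rescale_exp_pow_mul, sum_div, sum_mul]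
    exact sum_congr rfl fun j _ ↦ by rw [mul_pow]; ring
  rw [funext hterm, hval]
  exact hasSum_sum fun j _ ↦ (hexp _).mul_left _

def CoeffDominated (p P : ℝ⟦X⟧) : Prop := ∀ n, |coeff n p| ≤ coeff n P

namespace CoeffDominated

variable {p q P Q : ℝ⟦X⟧}

theorem one : CoeffDominated 1 1 := fun n ↦ by
  rw [coeff_one]; split_ifs <;> simp

theorem mul (hp : CoeffDominated p P) (hq : CoeffDominated q Q) :
    CoeffDominated (p * q) (P * Q) := fun n ↦ by
  rw [coeff_mul, coeff_mul]
  refine (abs_sum_le_sum_abs _ _).trans (sum_le_sum fun ij _ ↦ ?_)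
  rw [abs_mul]
  exact mul_le_mul (hp _) (hq _) (abs_nonneg _) ((abs_nonneg _).trans (hp _))

theorem pow (hp : CoeffDominated p P) (M : ℕ) : CoeffDominated (p ^ M) (P ^ M) := by
  induction M with
  | zero => simpa using one
  | succ M ih => simpa [pow_succ] using ih.mul hp

end CoeffDominated

theorem coeffDominated_rescale_exp (a : ℝ) :
    CoeffDominated (rescale a (exp ℝ)) (rescale |a| (exp ℝ)) := fun n ↦ by
  rw [coeff_rescale_exp, coeff_rescale_exp, abs_div, abs_pow, Nat.abs_cast]

theorem coeffDominated_one_sub_rescale_exp (a : ℝ) :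
    CoeffDominated (1 - rescale a (exp ℝ)) (rescale |a| (exp ℝ) - 1) := fun n ↦ by
  rw [map_sub, map_sub, coeff_one, coeff_rescale_exp, coeff_rescale_exp]
  rcases eq_or_ne n 0 with rfl | hn
  · simp
  · simp [hn, abs_div]

theorem hasSum_coeff_rescale_exp_sub_one_pow_mul (a c t : ℝ) (M : ℕ) :
    HasSum (fun n ↦ coeff n ((rescale a (exp ℝ) - 1) ^ M * rescale c (exp ℝ)) * t ^ n)
      ((Real.exp (a * t) - 1) ^ M * Real.exp (c * t)) := by
  have hsign : (rescale a (exp ℝ) - 1) ^ M * rescale c (exp ℝ) =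
      C ((-1) ^ M) * ((1 - rescale a (exp ℝ)) ^ M * rescale c (exp ℝ)) := by
    rw [← neg_sub, neg_pow, map_pow, map_neg, map_one, mul_assoc]
  have hval : (Real.exp (a * t) - 1) ^ M * Real.exp (c * t) =
      (-1) ^ M * ((1 - Real.exp (a * t)) ^ M * Real.exp (c * t)) := by
    rw [← neg_sub, neg_pow, mul_assoc]
  simp only [hsign, coeff_C_mul, mul_assoc, hval]
  exact (hasSum_coeff_one_sub_rescale_exp_pow_mul a c t M).mul_left _

/-- The `M`-th backward difference of `u ↦ u ^ n` at `y`; the statement's `c_n` is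
`∑_m backwardDiffPow m_r n (r x) / ∏ m_i^{k_i}`. -/
noncomputable def backwardDiffPow (M n : ℕ) (y : ℝ) : ℝ :=
  ∑ j ∈ range (M + 1), (-1) ^ j * (y - j) ^ n * M.choose j

theorem backwardDiffPow_eq_factorial_mul_coeff (M n : ℕ) (y : ℝ) :
    backwardDiffPow M n y =
      n ! * coeff n ((1 - rescale (-1) (exp ℝ)) ^ M * rescale y (exp ℝ)) := by
  rw [coeff_one_sub_rescale_exp_pow_mul, mul_div_cancel₀ _ (by positivity)]
  simp [backwardDiffPow, sub_eq_add_neg]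

theorem hasSum_backwardDiffPow (M : ℕ) (y t : ℝ) :
    HasSum (fun n ↦ backwardDiffPow M n y * t ^ n / n !)
      ((1 - Real.exp (-t)) ^ M * Real.exp (y * t)) := by
  convert hasSum_coeff_one_sub_rescale_exp_pow_mul (-1) y t M using 2 with n
  · rw [backwardDiffPow_eq_factorial_mul_coeff]
    field_simp
  · rw [neg_one_mul]

theorem abs_backwardDiffPow_le (M n : ℕ) (y : ℝ) :
    |backwardDiffPow M n y| ≤
      n ! * coeff n ((rescale 1 (exp ℝ) - 1) ^ M * rescale |y| (exp ℝ)) := by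
  have hdom :=
    ((coeffDominated_one_sub_rescale_exp (-1)).pow M).mul (coeffDominated_rescale_exp y)
  rw [backwardDiffPow_eq_factorial_mul_coeff, abs_mul, Nat.abs_cast]
  simpa using mul_le_mul_of_nonneg_left (hdom n) (by positivity : (0 : ℝ) ≤ n !)

theorem summable_backwardDiffPow_div {β : Type*} (M : β → ℕ) {w : β → ℝ} (hw : ∀ b, 0 ≤ w b)
    (y t : ℝ) (h : Summable fun b ↦ (Real.exp |t| - 1) ^ M b / w b) :
    Summable fun p : β × ℕ ↦ backwardDiffPow (M p.1) p.2 y * t ^ p.2 / p.2 ! / w p.1 := by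
  refine summable_of_norm_le_of_hasSum_fiberwise
    (F := fun p ↦
      coeff p.2 ((rescale 1 (exp ℝ) - 1) ^ M p.1 * rescale |y| (exp ℝ)) * |t| ^ p.2 / w p.1)
    (G := fun b ↦ (Real.exp |t| - 1) ^ M b * Real.exp (|y| * |t|) / w b)
    (fun p ↦ ?_) (fun b ↦ ?_) ((h.mul_right (Real.exp (|y| * |t|))).congr fun b ↦ by ring)
  · rw [Real.norm_eq_abs, abs_div, abs_div, abs_mul, abs_pow, abs_of_nonneg (hw _), Nat.abs_cast]
    refine div_le_div_of_nonneg_right ?_ (hw _)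
    rw [div_le_iff₀ (by positivity), mul_right_comm, mul_comm _ (p.2 ! : ℝ)]
    gcongr
    exact abs_backwardDiffPow_le _ _ _
  · simpa only [one_mul] using
      (hasSum_coeff_rescale_exp_sub_one_pow_mul 1 |y| |t| (M b)).div_const (w b)

abbrev MultiIndex (r : ℕ) : Type := {f : Fin r → ℕ // StrictMono f ∧ ∀ i, 0 < f i}

theorem multiPolylog_genfun_general (r : ℕ) (k : Fin r → ℤ) (x : ℝ) :
    ∀ᶠ t in nhds (0 : ℝ),
      HasSum (fun n : ℕ =>
        (∑' m : {f : Fin r → ℕ // StrictMono f ∧ ∀ i, 0 < f i},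
          ∑ j ∈ Finset.range (Finset.univ.sup m.1 + 1),
            (-1 : ℝ) ^ j * (r * x - j) ^ n * ((Finset.univ.sup m.1).choose j : ℝ) /
              ∏ i, ((m.1 i : ℝ) ^ (k i))) * t ^ n / n.factorial)
        (multiPolylog r k (1 - Real.exp (-t)) * Real.exp (r * x * t)) := by
  have hsmall : ∀ᶠ t in nhds (0 : ℝ), Real.exp |t| - 1 < 2⁻¹ ^ r :=
    ContinuousAt.eventually_lt (by fun_prop) continuousAt_const (by simp)
  filter_upwards [hsmall] with t ht
  have hpolylog : Summable fun m : MultiIndex r ↦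
      (Real.exp |t| - 1) ^ univ.sup m.1 / ∏ i, (m.1 i : ℝ) ^ k i :=
    (summable_pow_sup_div_prod_zpow k (ρ := 2⁻¹) (by norm_num) (by norm_num)
      (by linarith [Real.add_one_le_exp |t|, abs_nonneg t]) ht.le).comp_injective
      (i := fun m : MultiIndex r ↦ (⟨m.1, m.2.2⟩ : {f : Fin r → ℕ // ∀ i, 0 < f i}))
      fun _ _ h ↦ Subtype.ext (congrArg Subtype.val h :)
  have hsum := summable_backwardDiffPow_div (fun m : MultiIndex r ↦ univ.sup m.1)
    (w := fun m ↦ ∏ i, (m.1 i : ℝ) ^ k i) (fun m ↦ by positivity) (r * x) t hpolylog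
  have hrow (m : MultiIndex r) :=
    (hasSum_backwardDiffPow (univ.sup m.1) (r * x) t).div_const (∏ i, (m.1 i : ℝ) ^ k i)
  have hcoeff : (fun n : ℕ ↦ (∑' m : MultiIndex r, ∑ j ∈ range (univ.sup m.1 + 1),
        (-1 : ℝ) ^ j * (r * x - j) ^ n * (univ.sup m.1).choose j / ∏ i, (m.1 i : ℝ) ^ k i)
        * t ^ n / n !) = fun n ↦ ∑' m : MultiIndex r,
        backwardDiffPow (univ.sup m.1) n (r * x) * t ^ n / n ! / ∏ i, (m.1 i : ℝ) ^ k i := by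
    funext n
    rw [← tsum_mul_right, ← tsum_div_const]
    congr 1; funext m
    rw [backwardDiffPow, ← sum_div]; ring
  have hvalue : multiPolylog r k (1 - Real.exp (-t)) * Real.exp (r * x * t) =
      ∑' m : MultiIndex r, (1 - Real.exp (-t)) ^ univ.sup m.1 * Real.exp (r * x * t)
        / ∏ i, (m.1 i : ℝ) ^ k i := by
    rw [multiPolylog, ← tsum_mul_right]
    exact tsum_congr fun m ↦ div_mul_eq_mul_div _ _ _
  rw [hcoeff, hvalue]
  exact hsum.hasSum_tsum_fst hrow

/-- Generating function identity:
`Li_{(k_1,…,k_r)}(1-e^{-t}) e^{rxt} = ∑_n c_n t^n/n!` with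
`c_n = ∑_{0<m_1<…<m_r} ∑_{j=0}^{m_r} (-1)^j (rx-j)^n C(m_r,j) / ∏ m_i^{k_i}`. -/
theorem multiPolylog_genfun (r : ℕ) (hr : 0 < r) (k : Fin r → ℤ) (x : ℝ) :
    ∀ᶠ t in nhds (0 : ℝ),
      HasSum (fun n : ℕ =>
        (∑' m : {f : Fin r → ℕ // StrictMono f ∧ ∀ i, 0 < f i},
          ∑ j ∈ Finset.range (Finset.univ.sup m.1 + 1),
            (-1 : ℝ) ^ j * (r * x - j) ^ n * ((Finset.univ.sup m.1).choose j : ℝ) /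
              ∏ i, ((m.1 i : ℝ) ^ (k i))) * t ^ n / n.factorial)
        (multiPolylog r k (1 - Real.exp (-t)) * Real.exp (r * x * t)) :=
  multiPolylog_genfun_general r k x
end
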